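/- Let L₁ = b₁ + M₁ and L₂ = b₂ + M₂ be two linear sets in ℤ^n with a non-degenerate intersection, i.e., dim(L₁) = dim(L₁ ∩ L₂) = dim(L₂). Then there exist finite sets R₁ of interior vectors of M₁ and R₂ of interior vectors of M₂ such that for every x₁ ∈ L₁ and x₂ ∈ L₂ the sets x₁ + R₁* and x₂ + R₂* have a non-empty intersection. -/

import Mathlib

open scoped Pointwise

/-- The finite set `B` generates the set `V` as a ℚ-vector space. -/
def GeneratesQ {n : ℕ} (B : Finset (Fin n → ℚ)) (V : Set (Fin n → ℚ)) : Prop :=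
  (Submodule.span ℚ (B : Set (Fin n → ℚ)) : Set (Fin n → ℚ)) = V

/-- The rank of a vector space `V ⊆ ℚ^n`: minimal cardinality of a finite generating set. -/
noncomputable def rankOf {n : ℕ} (V : Set (Fin n → ℚ)) : ℕ :=
  sInf {d | ∃ B : Finset (Fin n → ℚ), B.card = d ∧ GeneratesQ B V}

-- Dimension of a subset of ℚ^n via finite covers by translates of vector spaces.
open Classical in
noncomputable def dimQ {n : ℕ} (X : Set (Fin n → ℚ)) : WithBot ℕ :=
  if X = ∅ then ⊥ else
    ↑(sInf {d : ℕ | ∃ (k : ℕ) (V : Fin k → Submodule ℚ (Fin n → ℚ))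
        (a : Fin k → (Fin n → ℚ)),
        (∀ j, rankOf ((V j : Set (Fin n → ℚ))) ≤ d) ∧
        X ⊆ ⋃ j, (a j +ᵥ (V j : Set (Fin n → ℚ)))})

/-- Dimension of a subset of ℤ^n, via the canonical embedding ℤ^n → ℚ^n. -/
noncomputable def dimZ {n : ℕ} (X : Set (Fin n → ℤ)) : WithBot ℕ :=
  dimQ ((fun (x : Fin n → ℤ) (i : Fin n) => (x i : ℚ)) '' X)

/-- `a` is an interior vector of the monoid `M ⊆ ℤ^n`. -/
def IsInteriorZ {n : ℕ} (M : Set (Fin n → ℤ)) (a : Fin n → ℤ) : Prop :=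
  a ∈ M ∧ ∀ x ∈ M, ∃ N : ℕ, 1 ≤ N ∧ ∃ m ∈ M, N • a = x + m

/-- `M` is a finitely generated (additive sub)monoid of ℤ^n (as a set). -/
def IsFGMonoid {n : ℕ} (M : Set (Fin n → ℤ)) : Prop :=
  ∃ P : Finset (Fin n → ℤ),
    M = (AddSubmonoid.closure (P : Set (Fin n → ℤ)) : Set (Fin n → ℤ))

/-- `L` is a linearization of the pseudo-linear set `X`. -/
def IsLinearization {n : ℕ} (L X : Set (Fin n → ℤ)) : Prop :=
  ∃ (b : Fin n → ℤ) (M : Set (Fin n → ℤ)), IsFGMonoid M ∧ L = b +ᵥ M ∧ X ⊆ L ∧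
    ∀ R : Finset (Fin n → ℤ), (∀ r ∈ R, IsInteriorZ M r) →
      ∃ x ∈ X, x +ᵥ (AddSubmonoid.closure (R : Set (Fin n → ℤ)) : Set (Fin n → ℤ)) ⊆ X

/-- `X ⊆ ℤ^n` is pseudo-linear. -/
def IsPseudoLinear {n : ℕ} (X : Set (Fin n → ℤ)) : Prop :=
  ∃ L, IsLinearization L X

/-!
Write `Cᵢ = Pᵢ*`, so that `Lᵢ = bᵢ + Cᵢ`. By Dickson's lemma `L₁ ∩ L₂` is covered by finitely many
translates of `C₁ ∩ C₂`, hence its dimension is at most the rank of `C₁ ∩ C₂`; conversely a grid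
`bᵢ + ∑ cⱼ vⱼ` over independent periods `vⱼ ∈ Cᵢ` shows `dim Lᵢ ≥ rank Cᵢ`. Non-degeneracy thus
forces `C₁ ∩ C₂` to span the same `ℚ`-space as `C₁` and as `C₂`. Clearing denominators, a positive
multiple of the sum of the generators of `Cᵢ` is a difference of two elements of `C₁ ∩ C₂`, which
yields `a ∈ C₁ ∩ C₂` interior to both monoids. With `Rᵢ = {a} ∪ (a + Pᵢ)`, the vector `t • a + m`
lies in `Rᵢ*` for every `m ∈ Cᵢ` and all large `t`, so for a fixed `c ∈ L₁ ∩ L₂` the point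
`c + t • a` lies in `x₁ + R₁*` and in `x₂ + R₂*` once `t` is large.
-/

section Monoid

variable {G : Type*}

lemma exists_finite_forall_exists_le {α : Type*} [PartialOrder α] [WellQuasiOrderedLE α]
    (S : Set α) : ∃ F ⊆ S, F.Finite ∧ ∀ x ∈ S, ∃ y ∈ F, y ≤ x :=
  ⟨{x | Minimal (· ∈ S) x}, fun _ hx => hx.prop,
    (setOfPred_minimal_antichain _).finite_of_partiallyWellOrderedOn
      ((Set.isPWO_of_wellQuasiOrderedLE S).mono fun _ hx => hx.prop),
    fun _ hx => by
      obtain ⟨y, hyx, hy⟩ := (Set.isPWO_of_wellQuasiOrderedLE S).exists_le_minimal hx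
      exact ⟨y, hy, hyx⟩⟩

lemma sum_nsmul_add_sum_nsmul_tsub [AddCommMonoid G] (P : Finset G) {u v : P → ℕ} (h : u ≤ v) :
    ∑ p : P, u p • (p : G) + ∑ p : P, (v p - u p) • (p : G) = ∑ p : P, v p • (p : G) := by
  rw [← Finset.sum_add_distrib]
  exact Finset.sum_congr rfl fun p _ => by rw [← add_nsmul, Nat.add_sub_cancel' (h p)]

/-- Dickson's lemma applied to the coefficient vectors of the points of the intersection. -/
lemma exists_finset_inter_vadd_closure_subset [AddCancelCommMonoid G] (b₁ b₂ : G)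
    (P₁ P₂ : Finset G) : ∃ F : Finset G,
      (b₁ +ᵥ (AddSubmonoid.closure (P₁ : Set G) : Set G)) ∩
          (b₂ +ᵥ (AddSubmonoid.closure (P₂ : Set G) : Set G)) ⊆
        ⋃ f ∈ F, f +ᵥ ((AddSubmonoid.closure (P₁ : Set G) ⊓
          AddSubmonoid.closure (P₂ : Set G) : AddSubmonoid G) : Set G) := by
  classical
  let S : Set ((P₁ → ℕ) × (P₂ → ℕ)) :=
    {w | b₁ + ∑ p : P₁, w.1 p • (p : G) = b₂ + ∑ p : P₂, w.2 p • (p : G)}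
  obtain ⟨F₀, hF₀S, hF₀, hF₀le⟩ := exists_finite_forall_exists_le S
  refine ⟨hF₀.toFinset.image fun w => b₁ + ∑ p : P₁, w.1 p • (p : G), ?_⟩
  rintro x ⟨⟨_, hm₁, rfl⟩, ⟨m₂, hm₂, hx⟩⟩
  obtain ⟨u₁, rfl⟩ := AddSubmonoid.mem_closure_finset'.1 hm₁
  obtain ⟨u₂, rfl⟩ := AddSubmonoid.mem_closure_finset'.1 hm₂
  simp only [vadd_eq_add] at hx ⊢
  obtain ⟨w, hwF, hw⟩ := hF₀le (u₁, u₂) hx.symm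
  have hwS : w ∈ S := hF₀S hwF
  have hsame : ∑ p : P₁, (u₁ p - w.1 p) • (p : G) = ∑ p : P₂, (u₂ p - w.2 p) • (p : G) := by
    refine add_left_cancel (a := b₁ + ∑ p : P₁, w.1 p • (p : G)) ?_
    rw [add_assoc, sum_nsmul_add_sum_nsmul_tsub P₁ hw.1, ← hx, hwS, add_assoc,
      sum_nsmul_add_sum_nsmul_tsub P₂ hw.2]
  simp only [Set.mem_iUnion, Finset.mem_image, Set.Finite.mem_toFinset]
  refine ⟨_, ⟨w, hwF, rfl⟩, ∑ p : P₁, (u₁ p - w.1 p) • (p : G), AddSubmonoid.mem_inf.2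
    ⟨sum_mem fun p _ => nsmul_mem (AddSubmonoid.subset_closure p.2) _,
      hsame ▸ sum_mem fun p _ => nsmul_mem (AddSubmonoid.subset_closure p.2) _⟩, ?_⟩
  change (_ : G) + _ = _
  rw [add_assoc, sum_nsmul_add_sum_nsmul_tsub P₁ hw.1]

end Monoid

section Absorb

open Filter

variable {G : Type*} [AddCommMonoid G] [DecidableEq G]

def shiftBy (a : G) (P : Finset G) : Finset G := insert a (P.image (a + ·))

lemma eventually_nsmul_add_mem_closure_shiftBy (a : G) {P : Finset G} {m : G}
    (hm : m ∈ AddSubmonoid.closure (P : Set G)) :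
    ∀ᶠ t : ℕ in atTop, t • a + m ∈ AddSubmonoid.closure (shiftBy a P : Set G) := by
  obtain ⟨u, rfl⟩ := AddSubmonoid.mem_closure_finset'.1 hm
  filter_upwards [eventually_ge_atTop (∑ p, u p)] with t ht
  have hsplit : t • a + ∑ p : P, u p • (p : G) =
      (t - ∑ p, u p) • a + ∑ p : P, u p • (a + p) := by
    simp only [smul_add, Finset.sum_add_distrib, ← Finset.sum_smul]
    rw [← add_assoc, ← add_nsmul, Nat.sub_add_cancel ht]
  rw [hsplit]
  refine add_mem (nsmul_mem (AddSubmonoid.subset_closure (by simp [shiftBy])) _)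
    (sum_mem fun p _ => nsmul_mem (AddSubmonoid.subset_closure ?_) _)
  simpa [shiftBy] using Or.inr ⟨p, p.2, rfl⟩

end Absorb

section Interior

variable {n : ℕ} {M : AddSubmonoid (Fin n → ℤ)} {a m : Fin n → ℤ}

lemma IsInteriorZ.add_mem (ha : IsInteriorZ M a) (hm : m ∈ M) : IsInteriorZ M (a + m) := by
  refine ⟨M.add_mem ha.1 hm, fun x hx => ?_⟩
  obtain ⟨N, hN, m', hm', hNa⟩ := ha.2 x hx
  refine ⟨N, hN, m' + N • m, M.add_mem hm' (M.nsmul_mem hm N), ?_⟩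
  rw [smul_add, hNa, add_assoc]

lemma IsInteriorZ.nsmul (ha : IsInteriorZ M a) {D : ℕ} (hD : D ≠ 0) : IsInteriorZ M (D • a) := by
  obtain ⟨D, rfl⟩ := Nat.exists_eq_succ_of_ne_zero hD
  rw [succ_nsmul']
  exact ha.add_mem (M.nsmul_mem ha.1 D)

lemma isInteriorZ_sum (P : Finset (Fin n → ℤ)) :
    IsInteriorZ (AddSubmonoid.closure (P : Set (Fin n → ℤ))) (∑ p ∈ P, p) := by
  refine ⟨sum_mem fun p hp => AddSubmonoid.subset_closure hp, fun x hx => ?_⟩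
  obtain ⟨u, rfl⟩ := AddSubmonoid.mem_closure_finset'.1 hx
  set N := ∑ p, u p + 1
  have hu : ∀ p, u p ≤ N := fun p =>
    (Finset.single_le_sum (fun _ _ => Nat.zero_le _) (Finset.mem_univ p)).trans (Nat.le_succ _)
  refine ⟨N, Nat.le_add_left 1 _, ∑ p : P, (N - u p) • (p : Fin n → ℤ),
    sum_mem fun p _ => nsmul_mem (AddSubmonoid.subset_closure p.2) _, ?_⟩
  rw [← Finset.sum_coe_sort, Finset.smul_sum, ← Finset.sum_add_distrib]
  exact Finset.sum_congr rfl fun p _ => by rw [← add_nsmul, Nat.add_sub_cancel' (hu p)]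

variable {P : Finset (Fin n → ℤ)}

lemma IsInteriorZ.mem_shiftBy (ha : IsInteriorZ (AddSubmonoid.closure (P : Set (Fin n → ℤ))) a) :
    ∀ r ∈ shiftBy a P, IsInteriorZ (AddSubmonoid.closure (P : Set (Fin n → ℤ))) r := by
  simp only [shiftBy, Finset.mem_insert, Finset.mem_image]
  rintro _ (rfl | ⟨p, hp, rfl⟩)
  exacts [ha, ha.add_mem (AddSubmonoid.subset_closure hp)]

open Filter in
lemma IsInteriorZ.eventually_add_nsmul_mem
    (ha : IsInteriorZ (AddSubmonoid.closure (P : Set (Fin n → ℤ))) a) {b c x : Fin n → ℤ}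
    (hc : c ∈ b +ᵥ (AddSubmonoid.closure (P : Set (Fin n → ℤ)) : Set (Fin n → ℤ)))
    (hx : x ∈ b +ᵥ (AddSubmonoid.closure (P : Set (Fin n → ℤ)) : Set (Fin n → ℤ))) :
    ∀ᶠ t : ℕ in atTop, c + t • a ∈
      x +ᵥ (AddSubmonoid.closure (shiftBy a P : Set (Fin n → ℤ)) : Set (Fin n → ℤ)) := by
  obtain ⟨μ, hμ, rfl⟩ := hc
  obtain ⟨m, hm, rfl⟩ := hx
  obtain ⟨N, -, m', hm', hNa⟩ := ha.2 m hm
  filter_upwards [eventually_ge_atTop N, (tendsto_sub_atTop_nat N).eventually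
    (eventually_nsmul_add_mem_closure_shiftBy a (AddSubmonoid.add_mem _ hm' hμ))] with t ht hmem
  refine ⟨_, hmem, ?_⟩
  have hsplit : t • a = (t - N) • a + N • a := by rw [← add_nsmul, Nat.sub_add_cancel ht]
  simp only [vadd_eq_add, hsplit, hNa]
  abel

end Interior

section RationalSpan

variable {n : ℕ}

def toRatVec : (Fin n → ℤ) →+ (Fin n → ℚ) := (Int.castAddHom ℚ).compLeft (Fin n)

lemma dimZ_eq_dimQ_image (X : Set (Fin n → ℤ)) : dimZ X = dimQ (toRatVec '' X) := rfl

lemma toRatVec_injective : Function.Injective (toRatVec (n := n)) :=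
  fun _ _ h => funext fun i => Int.cast_injective (congrFun h i)

lemma exists_add_eq_of_mem_addSubgroupClosure {G : Type*} [AddCommGroup G] {S : AddSubmonoid G}
    {x : G} (hx : x ∈ AddSubgroup.closure (S : Set G)) : ∃ u ∈ S, ∃ v ∈ S, x + v = u := by
  induction hx using AddSubgroup.closure_induction with
  | mem x hx => exact ⟨x, hx, 0, S.zero_mem, add_zero x⟩
  | zero => exact ⟨0, S.zero_mem, 0, S.zero_mem, add_zero 0⟩
  | add x y _ _ hx hy =>
    obtain ⟨u, hu, v, hv, huv⟩ := hx
    obtain ⟨u', hu', v', hv', huv'⟩ := hy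
    exact ⟨u + u', S.add_mem hu hu', v + v', S.add_mem hv hv', by rw [← huv, ← huv']; abel⟩
  | neg x _ hx =>
    obtain ⟨u, hu, v, hv, huv⟩ := hx
    exact ⟨v, hv, u, hu, by rw [← huv]; abel⟩

lemma exists_nsmul_mem_closure_of_mem_span {S : Set (Fin n → ℤ)} {z : Fin n → ℤ}
    (hz : toRatVec z ∈ Submodule.span ℚ (toRatVec '' S)) :
    ∃ D : ℕ, D ≠ 0 ∧ D • z ∈ AddSubgroup.closure S := by
  suffices h : ∀ y ∈ Submodule.span ℚ (toRatVec '' S),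
      ∃ D : ℕ, D ≠ 0 ∧ ∃ w ∈ AddSubgroup.closure S, toRatVec w = D • y by
    obtain ⟨D, hD, w, hw, hwz⟩ := h _ hz
    refine ⟨D, hD, ?_⟩
    rwa [← toRatVec_injective (hwz.trans (map_nsmul toRatVec D z).symm)]
  intro y hy
  induction hy using Submodule.span_induction with
  | mem y hy =>
    obtain ⟨x, hx, rfl⟩ := hy
    exact ⟨1, one_ne_zero, x, AddSubgroup.subset_closure hx, (one_smul ℕ _).symm⟩
  | zero => exact ⟨1, one_ne_zero, 0, zero_mem _, by simp⟩
  | add y y' _ _ hy hy' =>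
    obtain ⟨D, hD, w, hw, hwy⟩ := hy
    obtain ⟨D', hD', w', hw', hwy'⟩ := hy'
    refine ⟨D * D', mul_ne_zero hD hD', D' • w + D • w',
      add_mem (nsmul_mem hw _) (nsmul_mem hw' _), ?_⟩
    rw [map_add, map_nsmul, map_nsmul, hwy, hwy', smul_add, smul_smul, smul_smul, mul_comm D']
  | smul q y _ hy =>
    obtain ⟨D, hD, w, hw, hwy⟩ := hy
    refine ⟨q.den * D, mul_ne_zero q.den_nz hD, q.num • w, zsmul_mem hw _, ?_⟩
    rw [map_zsmul, hwy, ← Int.cast_smul_eq_zsmul ℚ, ← Nat.cast_smul_eq_nsmul ℚ,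
      ← Nat.cast_smul_eq_nsmul ℚ, smul_smul, smul_smul, Nat.cast_mul, ← Rat.mul_den_eq_num]
    ring_nf

variable {C C₁ C₂ K : AddSubmonoid (Fin n → ℤ)} {s s₁ s₂ : Fin n → ℤ}

lemma exists_isInteriorZ_mem_of_mem_span (hs : IsInteriorZ (C : Set (Fin n → ℤ)) s) (hK : K ≤ C)
    (h : toRatVec s ∈ Submodule.span ℚ (toRatVec '' (K : Set (Fin n → ℤ)))) :
    ∃ a ∈ K, IsInteriorZ (C : Set (Fin n → ℤ)) a := by
  obtain ⟨D, hD, hDs⟩ := exists_nsmul_mem_closure_of_mem_span h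
  obtain ⟨u, hu, v, hv, huv⟩ := exists_add_eq_of_mem_addSubgroupClosure hDs
  exact ⟨u, hu, huv ▸ (hs.nsmul hD).add_mem (hK hv)⟩

lemma exists_isInteriorZ_inf (hs₁ : IsInteriorZ (C₁ : Set (Fin n → ℤ)) s₁)
    (hs₂ : IsInteriorZ (C₂ : Set (Fin n → ℤ)) s₂)
    (h₁ : toRatVec s₁ ∈ Submodule.span ℚ (toRatVec '' ((C₁ ⊓ C₂ : AddSubmonoid _) : Set _)))
    (h₂ : toRatVec s₂ ∈ Submodule.span ℚ (toRatVec '' ((C₁ ⊓ C₂ : AddSubmonoid _) : Set _))) :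
    ∃ a, IsInteriorZ (C₁ : Set (Fin n → ℤ)) a ∧ IsInteriorZ (C₂ : Set (Fin n → ℤ)) a := by
  obtain ⟨a₁, ha₁K, ha₁⟩ := exists_isInteriorZ_mem_of_mem_span hs₁ inf_le_left h₁
  obtain ⟨a₂, ha₂K, ha₂⟩ := exists_isInteriorZ_mem_of_mem_span hs₂ inf_le_right h₂
  exact ⟨a₁ + a₂, ha₁.add_mem (inf_le_left (b := C₂) ha₂K),
    add_comm a₂ a₁ ▸ ha₂.add_mem (inf_le_right (a := C₁) ha₁K)⟩

end RationalSpan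

section Counting

variable {ι K : Type*} [Fintype ι] [Field K] [CharZero K]

/-- A proper subspace `U` of `K^ι` lies in the kernel of a functional `f` that is nonzero on some
basis vector `e i₀`; two grid points whose difference lies in `U` and which agree off `i₀`
therefore coincide. -/
lemma card_le_pow_of_sub_mem {U : Submodule K (ι → K)} (hU : U ≠ ⊤) {N : ℕ}
    (T : Finset (ι → Fin N))
    (hT : ∀ c ∈ T, ∀ c' ∈ T, (fun i => ((c i : ℕ) : K)) - (fun i => ((c' i : ℕ) : K)) ∈ U) :
    T.card ≤ N ^ (Fintype.card ι - 1) := by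
  classical
  obtain ⟨f, hf, hUf⟩ := U.exists_le_ker_of_lt_top hU.lt_top
  obtain ⟨i₀, hi₀⟩ : ∃ i₀, f (Pi.single i₀ 1) ≠ 0 := by
    by_contra! h
    exact hf ((Pi.basisFun K ι).ext fun i => by simpa using h i)
  have hinj : Set.InjOn (fun c : ι → Fin N => fun i : {i // i ≠ i₀} => c i) T := by
    intro c hc c' hc' hcc'
    set Δ : ι → K := (fun i => ((c i : ℕ) : K)) - (fun i => ((c' i : ℕ) : K))
    have hΔ : Δ = Δ i₀ • Pi.single i₀ 1 := by
      funext i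
      by_cases hi : i = i₀
      · subst hi; simp
      · simp [hi, Δ, congrFun hcc' ⟨i, hi⟩]
    have hΔ₀ : Δ i₀ = 0 := by
      have hfΔ : f Δ = 0 := hUf (hT c hc c' hc')
      rw [hΔ, map_smul, smul_eq_mul, mul_eq_zero] at hfΔ
      exact hfΔ.resolve_right hi₀
    funext i
    by_cases hi : i = i₀
    · subst hi
      simpa [Δ, sub_eq_zero, Fin.val_inj] using hΔ₀
    · exact congrFun hcc' ⟨i, hi⟩
  calc T.card ≤ (Finset.univ : Finset ({i // i ≠ i₀} → Fin N)).card :=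
        Finset.card_le_card_of_injOn _ (fun _ _ => Finset.mem_coe.2 (Finset.mem_univ _)) hinj
    _ = N ^ (Fintype.card ι - 1) := by
        simp [Fintype.card_subtype_compl]

end Counting

section Dimension

open Module

variable {n : ℕ}

lemma rankOf_eq_finrank (V : Submodule ℚ (Fin n → ℚ)) :
    rankOf (V : Set (Fin n → ℚ)) = finrank ℚ V := by
  obtain ⟨s, -, hspan, hli⟩ := exists_linearIndependent ℚ (V : Set (Fin n → ℚ))
  rw [Submodule.span_eq] at hspan
  have hs : s.Finite := hli.setFinite
  have hcard : hs.toFinset.card = finrank ℚ V := by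
    have := hs.fintype
    rw [Set.Finite.card_toFinset, ← finrank_span_eq_card hli, Subtype.range_coe, hspan]
  refine le_antisymm (Nat.sInf_le ⟨hs.toFinset, hcard, by simp [GeneratesQ, hspan]⟩)
    (le_csInf ⟨_, hs.toFinset, hcard, by simp [GeneratesQ, hspan]⟩ ?_)
  rintro _ ⟨B, rfl, hB⟩
  rw [← SetLike.coe_injective hB]
  exact finrank_span_finset_le_card B

def IsCoveredByTranslates (X : Set (Fin n → ℚ)) (d : ℕ) : Prop :=
  ∃ (k : ℕ) (V : Fin k → Submodule ℚ (Fin n → ℚ)) (a : Fin k → (Fin n → ℚ)),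
    (∀ j, rankOf (V j : Set (Fin n → ℚ)) ≤ d) ∧ X ⊆ ⋃ j, a j +ᵥ (V j : Set (Fin n → ℚ))

lemma IsCoveredByTranslates.mono {X : Set (Fin n → ℚ)} {d d' : ℕ}
    (h : IsCoveredByTranslates X d) (hd : d ≤ d') : IsCoveredByTranslates X d' :=
  let ⟨k, V, a, hV, hX⟩ := h
  ⟨k, V, a, fun j => (hV j).trans hd, hX⟩

lemma isCoveredByTranslates_of_subset_iUnion {ι : Type*} [Finite ι] {X : Set (Fin n → ℚ)}
    (a : ι → (Fin n → ℚ)) (V : Submodule ℚ (Fin n → ℚ))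
    (hX : X ⊆ ⋃ i, a i +ᵥ (V : Set (Fin n → ℚ))) : IsCoveredByTranslates X (finrank ℚ V) := by
  obtain ⟨k, ⟨e⟩⟩ := Finite.exists_equiv_fin ι
  refine ⟨k, fun _ => V, a ∘ e.symm, fun _ => (rankOf_eq_finrank V).le, ?_⟩
  intro x hx
  obtain ⟨i, hi⟩ := Set.mem_iUnion.1 (hX hx)
  exact Set.mem_iUnion.2 ⟨e i, by simpa using hi⟩

lemma dimQ_le_iff {X : Set (Fin n → ℚ)} {d : ℕ} :
    dimQ X ≤ d ↔ IsCoveredByTranslates X d := by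
  by_cases hX : X = ∅
  · simp only [dimQ, hX, if_true, bot_le, true_iff]
    exact ⟨0, Fin.elim0, Fin.elim0, fun j => j.elim0, Set.empty_subset _⟩
  · have hne : {d | IsCoveredByTranslates X d}.Nonempty :=
      ⟨_, isCoveredByTranslates_of_subset_iUnion (fun _ : Unit => 0) ⊤ fun x _ => by simp⟩
    rw [dimQ, if_neg hX]
    change ((sInf {d | IsCoveredByTranslates X d} : ℕ) : WithBot ℕ) ≤ d ↔ _
    exact ⟨fun h => (Nat.sInf_mem hne).mono (by exact_mod_cast h),
      fun h => by exact_mod_cast Nat.sInf_le h⟩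

lemma dimQ_eq_bot_iff {X : Set (Fin n → ℚ)} : dimQ X = ⊥ ↔ X = ∅ := by
  unfold dimQ
  split_ifs with hX <;> simp [hX]

/-- The grid `b + ∑ cᵢ vᵢ`, `0 ≤ cᵢ ≤ k`, has `(k+1)^r` points, while each of the `k` translates
`aⱼ + Vⱼ` of a subspace of rank `< r` meets it in at most `(k+1)^(r-1)` points. -/
lemma card_le_of_isCoveredByTranslates {ι : Type*} [Fintype ι] {v : ι → (Fin n → ℚ)}
    (hv : LinearIndependent ℚ v) {X : Set (Fin n → ℚ)} (b : Fin n → ℚ)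
    (hX : ∀ c : ι → ℕ, b + ∑ i, c i • v i ∈ X) {d : ℕ} (hd : IsCoveredByTranslates X d) :
    Fintype.card ι ≤ d := by
  classical
  by_contra! hlt
  obtain ⟨k, V, a, hV, hcov⟩ := hd
  set ℓ := Fintype.linearCombination ℚ v
  have hℓ : Function.Injective ℓ := linearIndependent_iff_injective_fintypeLinearCombination.1 hv
  let toQ : (ι → Fin (k + 1)) → ι → ℚ := fun c i => ((c i : ℕ) : ℚ)
  have hgrid : ∀ c, b + ℓ (toQ c) ∈ X := fun c => by
    simpa [ℓ, toQ, Fintype.linearCombination_apply, Nat.cast_smul_eq_nsmul] using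
      hX fun i => c i
  choose j hj using fun c => Set.mem_iUnion.1 (hcov (hgrid c))
  have hfiber : ∀ j₀, (Finset.univ.filter (j · = j₀)).card ≤ (k + 1) ^ (Fintype.card ι - 1) := by
    intro j₀
    refine card_le_pow_of_sub_mem (U := (V j₀).comap ℓ) ?_ _ ?_
    · intro htop
      have := Submodule.finrank_mono (Submodule.map_comap_le ℓ (V j₀))
      rw [htop, Submodule.map_top, LinearMap.finrank_range_of_inj hℓ,
        finrank_fintype_fun_eq_card, ← rankOf_eq_finrank] at this
      exact (this.trans (hV j₀)).not_gt hlt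
    · intro c hc c' hc'
      obtain ⟨w, hw, hcw⟩ := (Finset.mem_filter.1 hc).2 ▸ hj c
      obtain ⟨w', hw', hcw'⟩ := (Finset.mem_filter.1 hc').2 ▸ hj c'
      rw [Submodule.mem_comap, map_sub]
      convert (V j₀).sub_mem hw hw' using 1
      simp only [vadd_eq_add] at hcw hcw'
      rw [← add_sub_add_left_eq_sub _ _ b, ← hcw, ← hcw']
      abel
  have hcard := Finset.card_eq_sum_card_fiberwise (f := j) (s := Finset.univ)
    (t := Finset.univ) fun _ _ => Finset.mem_univ _
  have hle := hcard.trans_le (Finset.sum_le_sum fun j₀ _ => hfiber j₀)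
  simp only [Finset.card_univ, Fintype.card_fun, Fintype.card_fin, Finset.sum_const,
    smul_eq_mul] at hle
  have hpow : (k + 1) ^ Fintype.card ι = (k + 1) ^ (Fintype.card ι - 1) * (k + 1) := by
    rw [← pow_succ, Nat.sub_add_cancel (Nat.one_le_of_lt hlt)]
  nlinarith [pow_pos k.succ_pos (Fintype.card ι - 1)]

end Dimension

section LinearSets

open Module

variable {n : ℕ}

lemma card_le_dimQ {ι : Type*} [Fintype ι] {v : ι → (Fin n → ℚ)} (hv : LinearIndependent ℚ v)
    {X : Set (Fin n → ℚ)} (b : Fin n → ℚ) (hX : ∀ c : ι → ℕ, b + ∑ i, c i • v i ∈ X) :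
    (Fintype.card ι : WithBot ℕ) ≤ dimQ X := by
  obtain ⟨d, hd⟩ := WithBot.ne_bot_iff_exists.1
    (dimQ_eq_bot_iff.not.2 (Set.nonempty_iff_ne_empty.1 ⟨_, hX 0⟩))
  rw [← hd, Nat.cast_withBot]
  exact WithBot.coe_le_coe.2 <| card_le_of_isCoveredByTranslates hv b hX (dimQ_le_iff.1 hd.ge)

lemma dimZ_eq_bot_iff {X : Set (Fin n → ℤ)} : dimZ X = ⊥ ↔ X = ∅ := by
  rw [dimZ_eq_dimQ_image, dimQ_eq_bot_iff, Set.image_eq_empty]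

lemma finrank_span_le_dimZ (b : Fin n → ℤ) (C : AddSubmonoid (Fin n → ℤ)) :
    (finrank ℚ (Submodule.span ℚ (toRatVec '' (C : Set (Fin n → ℤ)))) : WithBot ℕ) ≤
      dimZ (b +ᵥ (C : Set (Fin n → ℤ))) := by
  obtain ⟨s, hsC, hspan, hli⟩ := exists_linearIndependent ℚ (toRatVec '' (C : Set (Fin n → ℤ)))
  have := hli.setFinite.fintype
  choose p hpC hp using fun i : s => hsC i.2
  rw [← hspan, ← Subtype.range_coe (s := s), finrank_span_eq_card hli]
  refine card_le_dimQ hli (toRatVec b) fun c =>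
    ⟨b + ∑ i, c i • p i, ⟨_, sum_mem fun i _ => nsmul_mem (hpC i) _, rfl⟩, ?_⟩
  change toRatVec (b + ∑ i, c i • p i) = _
  simp only [map_add, map_sum, map_nsmul, hp]

lemma dimZ_le_finrank_span_of_subset {X : Set (Fin n → ℤ)} {F : Finset (Fin n → ℤ)}
    {K : AddSubmonoid (Fin n → ℤ)} (hX : X ⊆ ⋃ f ∈ F, f +ᵥ (K : Set (Fin n → ℤ))) :
    dimZ X ≤ finrank ℚ (Submodule.span ℚ (toRatVec '' (K : Set (Fin n → ℤ)))) := by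
  refine dimQ_le_iff.2 (isCoveredByTranslates_of_subset_iUnion (fun f : F => toRatVec f) _ ?_)
  rintro _ ⟨x, hx, rfl⟩
  obtain ⟨f, hf, m, hm, rfl⟩ : ∃ f ∈ F, x ∈ f +ᵥ (K : Set (Fin n → ℤ)) := by simpa using hX hx
  exact Set.mem_iUnion.2 ⟨⟨f, hf⟩, toRatVec m, Submodule.subset_span ⟨m, hm, rfl⟩,
    (map_add toRatVec f m).symm⟩

lemma span_le_of_dimZ_le (b : Fin n → ℤ) {C K : AddSubmonoid (Fin n → ℤ)} (hK : K ≤ C)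
    (h : dimZ (b +ᵥ (C : Set (Fin n → ℤ))) ≤
      finrank ℚ (Submodule.span ℚ (toRatVec '' (K : Set (Fin n → ℤ))))) :
    Submodule.span ℚ (toRatVec '' (C : Set (Fin n → ℤ))) ≤
      Submodule.span ℚ (toRatVec '' (K : Set (Fin n → ℤ))) :=
  (Submodule.eq_of_le_of_finrank_le (Submodule.span_mono (Set.image_mono hK))
    (by exact_mod_cast (finrank_span_le_dimZ b C).trans h)).ge

end LinearSets

theorem stmt11 {n : ℕ} (b₁ b₂ : Fin n → ℤ) (M₁ M₂ : Set (Fin n → ℤ))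
    (hM₁ : IsFGMonoid M₁) (hM₂ : IsFGMonoid M₂)
    (L₁ L₂ : Set (Fin n → ℤ)) (hL₁ : L₁ = b₁ +ᵥ M₁) (hL₂ : L₂ = b₂ +ᵥ M₂)
    (hdim₁ : dimZ L₁ = dimZ (L₁ ∩ L₂)) (hdim₂ : dimZ (L₁ ∩ L₂) = dimZ L₂) :
    ∃ R₁ R₂ : Finset (Fin n → ℤ),
      (∀ r ∈ R₁, IsInteriorZ M₁ r) ∧ (∀ r ∈ R₂, IsInteriorZ M₂ r) ∧
      ∀ x₁ ∈ L₁, ∀ x₂ ∈ L₂,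
        ((x₁ +ᵥ (AddSubmonoid.closure (R₁ : Set (Fin n → ℤ)) : Set (Fin n → ℤ))) ∩
          (x₂ +ᵥ (AddSubmonoid.closure (R₂ : Set (Fin n → ℤ)) : Set (Fin n → ℤ)))).Nonempty := by
  obtain ⟨P₁, rfl⟩ := hM₁
  obtain ⟨P₂, rfl⟩ := hM₂
  obtain ⟨c, hc₁, hc₂⟩ : (L₁ ∩ L₂).Nonempty := by
    rw [Set.nonempty_iff_ne_empty, Ne, ← dimZ_eq_bot_iff, ← hdim₁, dimZ_eq_bot_iff, hL₁]
    exact Set.nonempty_iff_ne_empty.1 ⟨b₁ + 0, 0, zero_mem _, rfl⟩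
  subst hL₁ hL₂
  obtain ⟨F, hF⟩ := exists_finset_inter_vadd_closure_subset b₁ b₂ P₁ P₂
  have hK := dimZ_le_finrank_span_of_subset hF
  have hspan₁ := span_le_of_dimZ_le b₁ inf_le_left (hdim₁.trans_le hK)
  have hspan₂ := span_le_of_dimZ_le b₂ inf_le_right (hdim₂.symm.trans_le hK)
  obtain ⟨a, ha₁, ha₂⟩ := exists_isInteriorZ_inf (isInteriorZ_sum P₁) (isInteriorZ_sum P₂)
    (hspan₁ (Submodule.subset_span ⟨_, (isInteriorZ_sum P₁).1, rfl⟩))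
    (hspan₂ (Submodule.subset_span ⟨_, (isInteriorZ_sum P₂).1, rfl⟩))
  refine ⟨shiftBy a P₁, shiftBy a P₂, ha₁.mem_shiftBy, ha₂.mem_shiftBy, fun x₁ hx₁ x₂ hx₂ => ?_⟩
  obtain ⟨t, ht₁, ht₂⟩ :=
    ((ha₁.eventually_add_nsmul_mem hc₁ hx₁).and (ha₂.eventually_add_nsmul_mem hc₂ hx₂)).exists
  exact ⟨c + t • a, ht₁, ht₂⟩
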